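/- Let G be a graph with a 3-colouring c using colours from Z/3Z, and a layering (Y_0, Y_1, ...) of G such that the colours used on Y_i are exactly {i mod 3, (i−1) mod 3}. Suppose further that within each Y_i there is a set S_i ⊆ Y_i separating (in G[Y_{i-1} ∪ Y_i]) the vertices of Y_{i-1} from Y_i \ S_i, on which colour (i−1) mod 3 is not used. Then every monochromatic component of c is contained in a single layer Y_i. -/

import Mathlib

open SimpleGraph Set

/-- A layering of a graph: an ordered partition `(L 0, L 1, …)` of the vertex set
such that every edge joins vertices in the same or consecutive layers. -/
def IsLayering {α : Type} (G : SimpleGraph α) (L : ℕ → Set α) : Prop :=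
  (∀ v, ∃! i, v ∈ L i) ∧
  ∀ ⦃v w : α⦄, G.Adj v w → ∀ ⦃i j : ℕ⦄, v ∈ L i → w ∈ L j → i ≤ j + 1 ∧ j ≤ i + 1

/-- A tree-decomposition of `G` with tree `tG` and bags `B`. -/
def IsTreeDecomp {α T : Type} (G : SimpleGraph α) (tG : SimpleGraph T) (B : T → Set α) : Prop :=
  tG.IsTree ∧
  (∀ v : α, (tG.induce {x | v ∈ B x}).Connected) ∧
  (∀ ⦃v w : α⦄, G.Adj v w → ∃ x, v ∈ B x ∧ w ∈ B x)

/-- `G` has treewidth (strictly) less than `k`: a tree-decomposition with bags of size at most `k`. -/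
def TreewidthLT {α : Type} (G : SimpleGraph α) (k : ℕ) : Prop :=
  ∃ (T : Type) (tG : SimpleGraph T) (B : T → Set α),
    IsTreeDecomp G tG B ∧ ∀ x, (B x).encard ≤ k

/-- `G` has treewidth at most `t`. -/
def TreewidthAtMost {α : Type} (G : SimpleGraph α) (t : ℕ) : Prop :=
  TreewidthLT G (t + 1)

/-- Maximum degree at most `Δ`. -/
def MaxDegreeLE {α : Type} (G : SimpleGraph α) (Δ : ℕ) : Prop :=
  ∀ v, (G.neighborSet v).encard ≤ Δ

/-- A colouring `f` has clustering at most `s`: every monochromatic component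
(the set of vertices joined to `v` by a monochromatic walk) has at most `s` vertices. -/
def HasClustering {α β : Type} (G : SimpleGraph α) (f : α → β) (s : ℕ) : Prop :=
  ∀ v : α, {w | ∃ p : G.Walk v w, ∀ u ∈ p.support, f u = f v}.encard ≤ s

/-- Quotient graph of a graph by an indexed partition. -/
def QuotGraph {α ι : Type} (G : SimpleGraph α) (P : ι → Set α) : SimpleGraph ι where
  Adj x y := x ≠ y ∧ ∃ v w, v ∈ P x ∧ w ∈ P y ∧ G.Adj v w
  symm := ⟨by rintro x y ⟨h, v, w, hv, hw, hvw⟩; exact ⟨h.symm, w, v, hw, hv, hvw.symm⟩⟩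
  loopless := ⟨by rintro x ⟨h, _⟩; exact h rfl⟩

/-- The strong product of two graphs. -/
def StrongProd {α β : Type} (A : SimpleGraph α) (B : SimpleGraph β) : SimpleGraph (α × β) where
  Adj x y := x ≠ y ∧ (x.1 = y.1 ∨ A.Adj x.1 y.1) ∧ (x.2 = y.2 ∨ B.Adj x.2 y.2)
  symm := ⟨by
    rintro x y ⟨h, h1, h2⟩
    exact ⟨h.symm, h1.imp Eq.symm Adj.symm, h2.imp Eq.symm Adj.symm⟩⟩
  loopless := ⟨by rintro x ⟨h, _⟩; exact h rfl⟩

/-- The one-way infinite path on `ℕ`. -/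
def NatPath : SimpleGraph ℕ where
  Adj i j := j = i + 1 ∨ i = j + 1
  symm := ⟨by rintro i j (h | h); exacts [Or.inr h, Or.inl h]⟩
  loopless := ⟨by rintro i (h | h) <;> omega⟩

/-- The `p`-th power of a graph: join vertices at distance between 1 and `p`. -/
def PowerGraph {α : Type} (G : SimpleGraph α) (p : ℕ) : SimpleGraph α where
  Adj v w := v ≠ w ∧ ∃ q : G.Walk v w, q.length ≤ p
  symm := ⟨by rintro v w ⟨h, q, hq⟩; exact ⟨h.symm, q.reverse, by simpa using hq⟩⟩
  loopless := ⟨by rintro v ⟨h, _⟩; exact h rfl⟩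

/-- `G` has layered treewidth at most `k`. -/
def LayeredTreewidthLE {α : Type} (G : SimpleGraph α) (k : ℕ) : Prop :=
  ∃ (T : Type) (tG : SimpleGraph T) (B : T → Set α) (L : ℕ → Set α),
    IsTreeDecomp G tG B ∧ IsLayering G L ∧ ∀ x i, (B x ∩ L i).encard ≤ k

/-- An `H`-partition of `G`: parts indexed by vertices of `H` such that every edge of `G`
lies within a part or between parts adjacent in `H`. -/
def IsGraphPartition {α ι : Type} (G : SimpleGraph α) (H : SimpleGraph ι) (A : ι → Set α) : Prop :=
  (∀ v, ∃! x, v ∈ A x) ∧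
  ∀ ⦃v w : α⦄, G.Adj v w → ∀ ⦃x y : ι⦄, v ∈ A x → w ∈ A y → x = y ∨ H.Adj x y

/-- A `(k,ℓ)`-partition: a partition into nonempty parts whose quotient has treewidth at
most `k`, having layered width at most `ℓ` with respect to some layering. -/
def HasKLPartition {α : Type} (G : SimpleGraph α) (k ℓ : ℕ) : Prop :=
  ∃ (ι : Type) (P : ι → Set α),
    (∀ v, ∃! x, v ∈ P x) ∧ (∀ x, (P x).Nonempty) ∧
    TreewidthAtMost (QuotGraph G P) k ∧
    ∃ L, IsLayering G L ∧ ∀ x i, (P x ∩ L i).encard ≤ ℓ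

/-! An edge between `Y i` and `Y (i+1)` whose ends share a colour must have colour `i`, the only
colour common to both palettes. The one-edge walk along it is then a walk from `Y i` to
`Y (i+1) \ S (i+1)` inside the two layers, so one of its ends lies in `S (i+1)`, which avoids
colour `i`. Hence monochromatic edges stay inside a layer, and so do monochromatic walks. -/

theorem ZMod.eq_of_mem_pair_sub_one_of_mem_pair_add_one {a b : ZMod 3}
    (h₁ : a ∈ ({b, b - 1} : Set (ZMod 3))) (h₂ : a ∈ ({b + 1, b} : Set (ZMod 3))) : a = b := by
  simp only [Set.mem_insert_iff, Set.mem_singleton_iff] at h₁ h₂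
  revert a b
  decide

theorem SimpleGraph.Walk.mem_of_forall_adj_mem {α : Type} {G : SimpleGraph α} {P : α → Prop}
    {s : Set α} (hs : ∀ ⦃x y⦄, G.Adj x y → P x → P y → x ∈ s → y ∈ s) :
    ∀ {v w : α} (p : G.Walk v w), (∀ u ∈ p.support, P u) → v ∈ s → w ∈ s
  | _, _, .nil, _, hv => hv
  | _, _, .cons hxy q, hP, hv =>
    q.mem_of_forall_adj_mem hs (fun u hu => hP u (List.mem_cons_of_mem _ hu))
      (hs hxy (hP _ List.mem_cons_self) (hP _ (List.mem_cons_of_mem _ q.start_mem_support)) hv)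

section Layers

variable {α : Type} {G : SimpleGraph α} {c : α → ZMod 3} {Y S : ℕ → Set α}

theorem color_eq_of_mem_of_mem_succ (hpal : ∀ i : ℕ, c '' Y i = {(i : ZMod 3), (i : ZMod 3) - 1})
    {i : ℕ} {v w : α} (hc : c v = c w) (hv : v ∈ Y i) (hw : w ∈ Y (i + 1)) : c v = i := by
  apply ZMod.eq_of_mem_pair_sub_one_of_mem_pair_add_one (hpal i ▸ Set.mem_image_of_mem c hv)
  have := hpal (i + 1) ▸ Set.mem_image_of_mem c hw
  rwa [Nat.cast_succ, add_sub_cancel_right, ← hc] at this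

theorem not_adj_of_color_eq_of_mem_succ
    (hpal : ∀ i : ℕ, c '' Y i = {(i : ZMod 3), (i : ZMod 3) - 1})
    (hScol : ∀ i : ℕ, ∀ v ∈ S (i + 1), c v ≠ (i : ZMod 3))
    (hsep : ∀ i : ℕ, ∀ (v w : α) (p : G.Walk v w), v ∈ Y i → w ∈ Y (i + 1) \ S (i + 1) →
      (∀ u ∈ p.support, u ∈ Y i ∪ Y (i + 1)) → ∃ u ∈ p.support, u ∈ S (i + 1))
    {i : ℕ} {v w : α} (hc : c v = c w) (hv : v ∈ Y i) (hw : w ∈ Y (i + 1)) : ¬G.Adj v w := by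
  intro hvw
  have hcv : c v = i := color_eq_of_mem_of_mem_succ hpal hc hv hw
  have hwS : w ∉ S (i + 1) := fun hwS => hScol i w hwS (hc ▸ hcv)
  obtain ⟨u, hu, huS⟩ := hsep i v w hvw.toWalk hv ⟨hw, hwS⟩ (by simp [hvw.support_toWalk, hv, hw])
  rw [hvw.support_toWalk, List.mem_pair] at hu
  obtain rfl | rfl := hu
  · exact hScol i u huS hcv
  · exact hwS huS

theorem layer_eq_of_adj_of_color_eq (hY : IsLayering G Y)
    (hpal : ∀ i : ℕ, c '' Y i = {(i : ZMod 3), (i : ZMod 3) - 1})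
    (hScol : ∀ i : ℕ, ∀ v ∈ S (i + 1), c v ≠ (i : ZMod 3))
    (hsep : ∀ i : ℕ, ∀ (v w : α) (p : G.Walk v w), v ∈ Y i → w ∈ Y (i + 1) \ S (i + 1) →
      (∀ u ∈ p.support, u ∈ Y i ∪ Y (i + 1)) → ∃ u ∈ p.support, u ∈ S (i + 1))
    {i j : ℕ} {v w : α} (hvw : G.Adj v w) (hc : c v = c w) (hv : v ∈ Y i) (hw : w ∈ Y j) :
    i = j := by
  obtain ⟨hij, hji⟩ := hY.2 hvw hv hw
  rcases Nat.lt_trichotomy i j with h | h | h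
  · obtain rfl : j = i + 1 := by omega
    exact absurd hvw (not_adj_of_color_eq_of_mem_succ hpal hScol hsep hc hv hw)
  · exact h
  · obtain rfl : i = j + 1 := by omega
    exact absurd hvw.symm (not_adj_of_color_eq_of_mem_succ hpal hScol hsep hc.symm hw hv)

end Layers

theorem stmt14_general {α : Type} (G : SimpleGraph α) (c : α → ZMod 3) (Y : ℕ → Set α)
    (hY : IsLayering G Y)
    (hpal : ∀ i : ℕ, c '' Y i = {(i : ZMod 3), (i : ZMod 3) - 1})
    (S : ℕ → Set α)
    (hScol : ∀ i : ℕ, ∀ v ∈ S (i + 1), c v ≠ (i : ZMod 3))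
    (hsep : ∀ i : ℕ, ∀ (v w : α) (p : G.Walk v w), v ∈ Y i → w ∈ Y (i + 1) \ S (i + 1) →
      (∀ u ∈ p.support, u ∈ Y i ∪ Y (i + 1)) → ∃ u ∈ p.support, u ∈ S (i + 1)) :
    ∀ v w : α, (∃ p : G.Walk v w, ∀ u ∈ p.support, c u = c v) →
      ∃ i, v ∈ Y i ∧ w ∈ Y i := by
  rintro v w ⟨p, hp⟩
  obtain ⟨i, hv, -⟩ := hY.1 v
  refine ⟨i, hv, p.mem_of_forall_adj_mem (P := fun u => c u = c v) ?_ hp hv⟩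
  intro x y hxy hx hy hxi
  obtain ⟨j, hyj, -⟩ := hY.1 y
  rwa [layer_eq_of_adj_of_color_eq hY hpal hScol hsep hxy (hx.trans hy.symm) hxi hyj]

/-- Suppose `c : V(G) → ℤ/3ℤ` is a colouring and `(Y 0, Y 1, …)` a layering such
that the colours used on `Y i` are exactly `{i mod 3, (i−1) mod 3}`, and for each `i` there is
a set `S (i+1) ⊆ Y (i+1)` avoiding colour `i mod 3` that separates `Y i` from
`Y (i+1) \ S (i+1)` in `G[Y i ∪ Y (i+1)]`. Then every monochromatic component is contained in
a single layer. -/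
theorem stmt14 {α : Type} (G : SimpleGraph α) (c : α → ZMod 3) (Y : ℕ → Set α)
    (hY : IsLayering G Y)
    (hpal : ∀ i : ℕ, c '' Y i = {(i : ZMod 3), (i : ZMod 3) - 1})
    (S : ℕ → Set α) (hS : ∀ i, S (i + 1) ⊆ Y (i + 1))
    (hScol : ∀ i : ℕ, ∀ v ∈ S (i + 1), c v ≠ (i : ZMod 3))
    (hsep : ∀ i : ℕ, ∀ (v w : α) (p : G.Walk v w), v ∈ Y i → w ∈ Y (i + 1) \ S (i + 1) →
      (∀ u ∈ p.support, u ∈ Y i ∪ Y (i + 1)) → ∃ u ∈ p.support, u ∈ S (i + 1)) :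
    ∀ v w : α, (∃ p : G.Walk v w, ∀ u ∈ p.support, c u = c v) →
      ∃ i, v ∈ Y i ∧ w ∈ Y i :=
  stmt14_general G c Y hY hpal S hScol hsep
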